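/- If a state x₀ lies on the boundary ∂R_a(T) of the reachable set at time T, then x₀ ∉ R_a(τ) for any τ < T; hence the minimal time needed to reach x₀ with inputs bounded by 1 equals T. -/

import Mathlib

open MeasureTheory Matrix Set

/-- The reachable set at time `T` of `ẋ = Ax + Bu` with inputs bounded by `1` in sup-norm. -/
noncomputable def reachSet {n r : ℕ} (A : Matrix (Fin n) (Fin n) ℝ)
    (B : Matrix (Fin n) (Fin r) ℝ) (T : ℝ) : Set (Fin n → ℝ) :=
  {x | ∃ z : ℝ → Fin r → ℝ, Measurable z ∧ (∀ t i, |z t i| ≤ 1) ∧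
    x = ∫ t in Ioc (0:ℝ) T, (NormedSpace.exp (t • A)).mulVec (B.mulVec (z t))}

/-- The Kalman controllability matrix `[B, AB, …, A^{n-1}B]`. -/
def ctrbMatrix {n r : ℕ} (A : Matrix (Fin n) (Fin n) ℝ)
    (B : Matrix (Fin n) (Fin r) ℝ) : Matrix (Fin n) (Fin n × Fin r) ℝ :=
  Matrix.of fun i p => (A ^ (p.1 : ℕ) * B) i p.2

/-- The minimal time needed to reach `x₀` with inputs bounded by `1`. -/
noncomputable def minTime {n r : ℕ} (A : Matrix (Fin n) (Fin n) ℝ)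
    (B : Matrix (Fin n) (Fin r) ℝ) (x₀ : Fin n → ℝ) : ℝ :=
  sInf {τ : ℝ | 0 < τ ∧ x₀ ∈ reachSet A B τ}


namespace TimeOpt

section deriv
variable {n : ℕ}
attribute [local instance] Matrix.linftyOpNormedRing Matrix.linftyOpNormedAlgebra
  Matrix.instCompleteSpace

lemma matexp_hasDerivAt (A : Matrix (Fin n) (Fin n) ℝ) (L : Matrix (Fin n) (Fin n) ℝ →ₗ[ℝ] ℝ) (t : ℝ) :
    HasDerivAt (fun s : ℝ => L (NormedSpace.exp (s • A)))
      (L (NormedSpace.exp (t • A) * A)) t :=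
  (LinearMap.toContinuousLinearMap L).hasFDerivAt.comp_hasDerivAt t
    (hasDerivAt_exp_smul_const (𝕂 := ℝ) A t)

lemma matexp_continuous (A : Matrix (Fin n) (Fin n) ℝ) :
    Continuous fun t : ℝ => NormedSpace.exp (t • A) :=
  NormedSpace.exp_continuous.comp (continuous_id.smul continuous_const)
end deriv

attribute [local instance] Matrix.seminormedAddCommGroup Matrix.normedAddCommGroup

variable {n r : ℕ} (A : Matrix (Fin n) (Fin n) ℝ) (B : Matrix (Fin n) (Fin r) ℝ)

/-- `G t = e^{tA} B`. -/
noncomputable def G (t : ℝ) : Matrix (Fin n) (Fin r) ℝ := NormedSpace.exp (t • A) * B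

lemma continuous_G : Continuous (G A B) :=
  (matexp_continuous A).matrix_mul continuous_const

/-- admissible controls -/
def Adm (z : ℝ → Fin r → ℝ) : Prop := Measurable z ∧ ∀ t i, |z t i| ≤ 1

def segSet (a b : ℝ) : Set (Fin n → ℝ) :=
  {s | ∃ z : ℝ → Fin r → ℝ, Measurable z ∧ (∀ t i, |z t i| ≤ 1) ∧
    s = ∫ t in Ioc a b, (G A B t).mulVec (z t)}

lemma measurable_integrand {z : ℝ → Fin r → ℝ} (hz : Measurable z) :
    Measurable fun t => (G A B t).mulVec (z t) := by
  rw [measurable_pi_iff]; intro i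
  simp only [Matrix.mulVec, dotProduct]
  exact Finset.measurable_sum _ fun j _ =>
    ((continuous_G A B).matrix_elem i j).measurable.mul ((measurable_pi_apply j).comp hz)

lemma integrableOn_integrand (a b : ℝ) {z : ℝ → Fin r → ℝ} (hz : Measurable z)
    (hb : ∀ t i, |z t i| ≤ 1) :
    IntegrableOn (fun t => (G A B t).mulVec (z t)) (Ioc a b) := by
  obtain ⟨C, hC⟩ := (isCompact_Icc (a := a) (b := b)).exists_bound_of_continuousOn
    (continuous_G A B).continuousOn
  refine Integrable.mono' (g := fun _ => (r : ℝ) * max C 0)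
    (integrableOn_const measure_Ioc_lt_top.ne)
    (measurable_integrand A B hz).aestronglyMeasurable ?_
  filter_upwards [ae_restrict_mem measurableSet_Ioc] with t ht
  rw [pi_norm_le_iff_of_nonneg (show (0:ℝ) ≤ (r:ℝ) * max C 0 by positivity)]
  intro i
  have hGt : ∀ j, |G A B t i j| ≤ max C 0 := fun j => by
    have h := Matrix.norm_entry_le_entrywise_sup_norm (G A B t) (i := i) (j := j)
    rw [Real.norm_eq_abs] at h
    exact h.trans ((hC t (Ioc_subset_Icc_self ht)).trans (le_max_left _ _))
  calc ‖(G A B t).mulVec (z t) i‖ = |∑ j, G A B t i j * z t j| := rfl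
    _ ≤ ∑ j, |G A B t i j * z t j| := Finset.abs_sum_le_sum_abs _ _
    _ ≤ ∑ j, max C 0 := by
        refine Finset.sum_le_sum fun j _ => ?_
        rw [abs_mul]
        calc |G A B t i j| * |z t j| ≤ max C 0 * 1 :=
              mul_le_mul (hGt j) (hb t j) (abs_nonneg _) (le_max_right _ _)
          _ = max C 0 := mul_one _
    _ = (r : ℝ) * max C 0 := by simp [Finset.sum_const, Finset.card_univ]

lemma reachSet_eq (T : ℝ) : reachSet A B T = segSet A B 0 T := by
  unfold reachSet segSet
  ext x
  simp only [mem_setOf_eq]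
  refine exists_congr fun z => and_congr_right fun _ => and_congr_right fun _ => ?_
  have : ∀ t : ℝ, (NormedSpace.exp (t • A)).mulVec (B.mulVec (z t)) = (G A B t).mulVec (z t) :=
    fun t => Matrix.mulVec_mulVec _ _ _
  rw [funext this]

lemma zero_mem_segSet (a b : ℝ) : (0 : Fin n → ℝ) ∈ segSet A B a b :=
  ⟨0, measurable_const, fun t i => by simp, by simp⟩

lemma neg_mem_segSet {a b : ℝ} {x : Fin n → ℝ} (hx : x ∈ segSet A B a b) :
    -x ∈ segSet A B a b := by
  obtain ⟨z, hzm, hzb, rfl⟩ := hx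
  refine ⟨fun t => -(z t), hzm.neg, fun t i => by simpa using hzb t i, ?_⟩
  rw [← integral_neg]
  exact setIntegral_congr_fun measurableSet_Ioc fun t _ => by simp [Matrix.mulVec_neg]

lemma convex_segSet (a b : ℝ) : Convex ℝ (segSet A B a b) := by
  rintro x ⟨z₁, hz₁m, hz₁b, rfl⟩ y ⟨z₂, hz₂m, hz₂b, rfl⟩ p q hp hq hpq
  refine ⟨fun t => p • z₁ t + q • z₂ t, (hz₁m.const_smul p).add (hz₂m.const_smul q), fun t i => ?_, ?_⟩
  · calc |(p • z₁ t + q • z₂ t) i| = |p * z₁ t i + q * z₂ t i| := rfl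
      _ ≤ |p * z₁ t i| + |q * z₂ t i| := abs_add_le _ _
      _ ≤ p * 1 + q * 1 := by
          rw [abs_mul, abs_mul, abs_of_nonneg hp, abs_of_nonneg hq]
          exact add_le_add (mul_le_mul_of_nonneg_left (hz₁b t i) hp)
            (mul_le_mul_of_nonneg_left (hz₂b t i) hq)
      _ = 1 := by rw [mul_one, mul_one, hpq]
  · have h1 := integrableOn_integrand A B a b hz₁m hz₁b
    have h2 := integrableOn_integrand A B a b hz₂m hz₂b
    rw [eq_comm]
    calc ∫ t in Ioc a b, (G A B t).mulVec ((fun t => p • z₁ t + q • z₂ t) t)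
        = ∫ t in Ioc a b, (p • ((G A B t).mulVec (z₁ t)) + q • ((G A B t).mulVec (z₂ t))) :=
          setIntegral_congr_fun measurableSet_Ioc fun t _ => by
            simp [Matrix.mulVec_add, Matrix.mulVec_smul]
      _ = (∫ t in Ioc a b, p • ((G A B t).mulVec (z₁ t))) +
            ∫ t in Ioc a b, q • ((G A B t).mulVec (z₂ t)) :=
          integral_add (h1.smul p) (h2.smul q)
      _ = (p • ∫ t in Ioc a b, (G A B t).mulVec (z₁ t)) +
            (q • ∫ t in Ioc a b, (G A B t).mulVec (z₂ t)) := by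
          rw [integral_smul, integral_smul]

lemma add_mem_segSet {a b c : ℝ} (hab : a ≤ b) (hbc : b ≤ c) {x y : Fin n → ℝ}
    (hx : x ∈ segSet A B a b) (hy : y ∈ segSet A B b c) : x + y ∈ segSet A B a c := by
  obtain ⟨z₁, hz₁m, hz₁b, rfl⟩ := hx
  obtain ⟨z₂, hz₂m, hz₂b, rfl⟩ := hy
  set z : ℝ → Fin r → ℝ := fun t => if t ≤ b then z₁ t else z₂ t with hz
  have hzm : Measurable z :=
    Measurable.ite (measurableSet_le measurable_id measurable_const) hz₁m hz₂m
  have hzb : ∀ t i, |z t i| ≤ 1 := fun t i => by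
    simp only [hz]; split <;> [exact hz₁b t i; exact hz₂b t i]
  refine ⟨z, hzm, hzb, ?_⟩
  have hdisj : Disjoint (Ioc a b) (Ioc b c) :=
    Set.Ioc_disjoint_Ioc.mpr (le_trans (min_le_left _ _) (le_max_right _ _))
  rw [← Ioc_union_Ioc_eq_Ioc hab hbc,
    setIntegral_union hdisj measurableSet_Ioc
      ((integrableOn_integrand A B a b hzm hzb))
      ((integrableOn_integrand A B b c hzm hzb))]
  congr 1
  · exact setIntegral_congr_fun measurableSet_Ioc fun t ht => by
      simp [hz, ht.2]
  · exact setIntegral_congr_fun measurableSet_Ioc fun t ht => by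
      simp [hz, not_le.mpr ht.1]



/-- dot product with `c` as a linear map. -/
def dotLM (c : Fin n → ℝ) : (Fin n → ℝ) →ₗ[ℝ] ℝ where
  toFun := fun v => c ⬝ᵥ v
  map_add' := fun u v => dotProduct_add c u v
  map_smul' := fun a v => by simp [dotProduct_smul]

/-- `M ↦ c ⬝ᵥ (M *ᵥ v)` as a linear map on matrices. -/
def dotMulLM (c v : Fin n → ℝ) : Matrix (Fin n) (Fin n) ℝ →ₗ[ℝ] ℝ where
  toFun := fun M => c ⬝ᵥ (M.mulVec v)
  map_add' := fun M N => by simp [Matrix.add_mulVec, dotProduct_add]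
  map_smul' := fun a M => by simp [Matrix.smul_mulVec, dotProduct_smul]

noncomputable def dotCLM (c : Fin n → ℝ) : (Fin n → ℝ) →L[ℝ] ℝ :=
  LinearMap.toContinuousLinearMap (dotLM c)

@[simp] lemma dotCLM_apply (c v : Fin n → ℝ) : dotCLM c v = c ⬝ᵥ v := rfl

lemma vecMul_G_continuous (c : Fin n → ℝ) (j : Fin r) :
    Continuous fun t => (c ᵥ* G A B t) j := by
  have : (fun t => (c ᵥ* G A B t) j) = fun t => ∑ i, c i * G A B t i j := rfl
  rw [this]
  exact continuous_finset_sum _ fun i _ =>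
    continuous_const.mul ((continuous_G A B).matrix_elem i j)

lemma eq_zero_of_forall_dot (hctrb : (ctrbMatrix A B).rank = n) {a b : ℝ} (hab : a < b)
    (c : Fin n → ℝ) (hc : ∀ s ∈ segSet A B a b, c ⬝ᵥ s = 0) : c = 0 := by
  classical
  set w : ℝ → Fin r → ℝ := fun t => c ᵥ* G A B t with hw
  -- the bang-bang control aligned with w
  set z : ℝ → Fin r → ℝ := fun t j => if 0 ≤ w t j then 1 else -1 with hzdef
  have hzm : Measurable z := by
    rw [measurable_pi_iff]; intro j
    exact Measurable.ite
      (measurableSet_le measurable_const (vecMul_G_continuous A B c j).measurable)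
      measurable_const measurable_const
  have hzb : ∀ t i, |z t i| ≤ 1 := fun t i => by
    simp only [hzdef]; split <;> simp
  have hmem : (∫ t in Ioc a b, (G A B t).mulVec (z t)) ∈ segSet A B a b := ⟨z, hzm, hzb, rfl⟩
  have hint := integrableOn_integrand A B a b hzm hzb
  have hswap : (∫ t in Ioc a b, c ⬝ᵥ ((G A B t).mulVec (z t))) = 0 := by
    have h1 := (dotCLM c).integral_comp_comm hint
    simp only [dotCLM_apply] at h1
    rw [h1]
    exact hc _ hmem
  have hptw : ∀ t, c ⬝ᵥ ((G A B t).mulVec (z t)) = ∑ j, |w t j| := by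
    intro t
    rw [Matrix.dotProduct_mulVec]
    have : ∀ j, w t j * z t j = |w t j| := by
      intro j
      by_cases h : 0 ≤ w t j
      · simp only [hzdef, if_pos h, mul_one, abs_of_nonneg h]
      · push_neg at h
        simp only [hzdef, if_neg (not_le.mpr h), abs_of_neg h]; ring
    calc (c ᵥ* G A B t) ⬝ᵥ z t = ∑ j, w t j * z t j := rfl
      _ = ∑ j, |w t j| := Finset.sum_congr rfl fun j _ => this j
  set f : ℝ → ℝ := fun t => ∑ j, |w t j| with hf
  have hfcont : Continuous f :=
    continuous_finset_sum _ fun j _ => (vecMul_G_continuous A B c j).abs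
  have hfnn : ∀ t, 0 ≤ f t := fun t => Finset.sum_nonneg fun j _ => abs_nonneg _
  have hfint : (∫ t in Ioc a b, f t) = 0 := by
    rw [← hswap]
    exact setIntegral_congr_fun measurableSet_Ioc fun t _ => (hptw t).symm
  -- f vanishes on Ioo a b
  have hf0 : ∀ t ∈ Ioo a b, f t = 0 := by
    by_contra h
    push_neg at h
    obtain ⟨t₀, ht₀, hft₀⟩ := h
    have hsupp : (volume (Function.support f ∩ Ioc a b)) = 0 := by
      by_contra hp
      have hpos : 0 < volume (Function.support f ∩ Ioc a b) := by
        exact pos_iff_ne_zero.mpr hp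
      have := (setIntegral_pos_iff_support_of_nonneg_ae
        (Filter.Eventually.of_forall fun t => hfnn t : 0 ≤ᶠ[ae (volume.restrict (Ioc a b))] f)
        (hfcont.integrableOn_Ioc)).mpr hpos
      exact absurd hfint (by linarith)
    have hopen : IsOpen (Function.support f ∩ Ioo a b) :=
      (hfcont.isOpen_support).inter isOpen_Ioo
    have hne : (Function.support f ∩ Ioo a b).Nonempty := ⟨t₀, hft₀, ht₀⟩
    have hposvol := hopen.measure_pos volume hne
    have hsub : Function.support f ∩ Ioo a b ⊆ Function.support f ∩ Ioc a b :=
      inter_subset_inter_right _ Ioo_subset_Ioc_self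
    exact absurd (measure_mono hsub) (by rw [hsupp]; exact not_le.mpr hposvol)
  have hw0 : ∀ t ∈ Ioo a b, ∀ j, w t j = 0 := by
    intro t ht j
    have h := hf0 t ht
    rw [hf] at h
    have := (Finset.sum_eq_zero_iff_of_nonneg (fun j _ => abs_nonneg (w t j))).1 h j
      (Finset.mem_univ j)
    exact abs_eq_zero.1 this
  -- now the derivative bootstrap
  have main : ∀ (k : ℕ), ∀ t ∈ Ioo a b, c ᵥ* (NormedSpace.exp (t • A) * (A ^ k * B)) = 0 := by
    intro k
    induction k with
    | zero =>
      intro t ht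
      funext j
      have : NormedSpace.exp (t • A) * (A ^ 0 * B) = G A B t := by
        rw [pow_zero, Matrix.one_mul]; rfl
      rw [this]
      exact hw0 t ht j
    | succ k ih =>
      intro t ht
      funext j
      set v : Fin n → ℝ := (A ^ k * B).mulVec (Pi.single j 1) with hv
      have key : ∀ M : Matrix (Fin n) (Fin n) ℝ,
          dotMulLM c v M = (c ᵥ* (M * (A ^ k * B))) j := by
        intro M
        show c ⬝ᵥ (M.mulVec v) = _
        rw [hv, Matrix.mulVec_mulVec, Matrix.dotProduct_mulVec, dotProduct_single,
          mul_one]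
      have hzero : ∀ s ∈ Ioo a b, dotMulLM c v (NormedSpace.exp (s • A)) = 0 := by
        intro s hs
        rw [key]
        exact congrFun (ih s hs) j
      have heq : (fun s => dotMulLM c v (NormedSpace.exp (s • A))) =ᶠ[nhds t] fun _ => 0 :=
        Filter.eventuallyEq_of_mem (isOpen_Ioo.mem_nhds ht) hzero
      have hderiv0 : deriv (fun s => dotMulLM c v (NormedSpace.exp (s • A))) t = 0 := by
        rw [heq.deriv_eq]; exact deriv_const t 0
      have hD := (matexp_hasDerivAt A (dotMulLM c v) t).deriv
      rw [hderiv0] at hD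
      -- hD : 0 = dotMulLM c v (exp (t•A) * A)  (or the reverse)
      have h2 : dotMulLM c v (NormedSpace.exp (t • A) * A) = 0 := hD.symm
      rw [key] at h2
      have h3 : NormedSpace.exp (t • A) * A * (A ^ k * B)
          = NormedSpace.exp (t • A) * (A ^ (k + 1) * B) := by
        rw [Matrix.mul_assoc, ← Matrix.mul_assoc A (A ^ k) B, ← pow_succ']
      rw [h3] at h2
      exact h2
  -- evaluate at midpoint
  set t₀ : ℝ := (a + b) / 2 with ht₀def
  have ht₀ : t₀ ∈ Ioo a b := ⟨by simp only [ht₀def]; linarith, by simp only [ht₀def]; linarith⟩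
  set d : Fin n → ℝ := c ᵥ* NormedSpace.exp (t₀ • A) with hd
  have hdk : ∀ k : ℕ, d ᵥ* (A ^ k * B) = 0 := by
    intro k
    rw [hd, Matrix.vecMul_vecMul]
    exact main k t₀ ht₀
  have hdc : d ᵥ* ctrbMatrix A B = 0 := by
    funext p
    obtain ⟨k, j⟩ := p
    have := congrFun (hdk (k : ℕ)) j
    calc (d ᵥ* ctrbMatrix A B) (k, j) = ∑ i, d i * (A ^ (k : ℕ) * B) i j := rfl
      _ = (d ᵥ* (A ^ (k : ℕ) * B)) j := rfl
      _ = 0 := this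
  -- controllability: mulVecLin of ctrbMatrix is surjective
  have hrange : LinearMap.range (ctrbMatrix A B).mulVecLin = ⊤ := by
    apply Submodule.eq_top_of_finrank_eq
    have h1 : (ctrbMatrix A B).rank
        = Module.finrank ℝ (LinearMap.range (ctrbMatrix A B).mulVecLin) := rfl
    rw [← h1, hctrb, Module.finrank_fin_fun]
  obtain ⟨v, hv⟩ : ∃ v, (ctrbMatrix A B).mulVec v = d := by
    have := LinearMap.range_eq_top.1 hrange d
    obtain ⟨v, hv⟩ := this
    exact ⟨v, hv⟩
  have hd0 : d = 0 := by
    rw [← dotProduct_self_eq_zero (v := d)]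
    calc d ⬝ᵥ d = d ⬝ᵥ ((ctrbMatrix A B).mulVec v) := by rw [hv]
      _ = (d ᵥ* ctrbMatrix A B) ⬝ᵥ v := Matrix.dotProduct_mulVec _ _ _
      _ = 0 := by rw [hdc, zero_dotProduct]
  -- invert the exponential
  have hcomm : Commute (t₀ • A) (-(t₀ • A)) := (Commute.refl (t₀ • A)).neg_right
  have hexp1 : NormedSpace.exp (t₀ • A) * NormedSpace.exp (-(t₀ • A)) = 1 := by
    rw [← Matrix.exp_add_of_commute _ _ hcomm, add_neg_cancel, NormedSpace.exp_zero]
  calc c = c ᵥ* (1 : Matrix (Fin n) (Fin n) ℝ) := (Matrix.vecMul_one c).symm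
    _ = c ᵥ* (NormedSpace.exp (t₀ • A) * NormedSpace.exp (-(t₀ • A))) := by rw [hexp1]
    _ = (c ᵥ* NormedSpace.exp (t₀ • A)) ᵥ* NormedSpace.exp (-(t₀ • A)) :=
        (Matrix.vecMul_vecMul _ _ _).symm
    _ = d ᵥ* NormedSpace.exp (-(t₀ • A)) := by rw [← hd]
    _ = (0 : Fin n → ℝ) ᵥ* NormedSpace.exp (-(t₀ • A)) := by rw [hd0]
    _ = 0 := Matrix.zero_vecMul _



lemma span_segSet_eq_top (hctrb : (ctrbMatrix A B).rank = n) {a b : ℝ} (hab : a < b) :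
    Submodule.span ℝ (segSet A B a b) = ⊤ := by
  by_contra h
  have hlt : Submodule.span ℝ (segSet A B a b) < ⊤ := lt_top_iff_ne_top.2 h
  obtain ⟨φ, hφne, hφmap⟩ := Submodule.exists_dual_map_eq_bot_of_lt_top hlt inferInstance
  set c : Fin n → ℝ := fun i => φ fun j => if i = j then 1 else 0 with hcdef
  have hφeq : ∀ x : Fin n → ℝ, φ x = c ⬝ᵥ x := by
    intro x
    rw [LinearMap.pi_apply_eq_sum_univ φ x]
    simp only [dotProduct, hcdef]
    exact Finset.sum_congr rfl fun i _ => by rw [smul_eq_mul, mul_comm]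
  have hc0 : c = 0 := by
    refine eq_zero_of_forall_dot A B hctrb hab c fun s hs => ?_
    rw [← hφeq]
    have : φ s ∈ Submodule.map φ (Submodule.span ℝ (segSet A B a b)) :=
      Submodule.mem_map_of_mem (Submodule.subset_span hs)
    rw [hφmap] at this
    exact this
  exact hφne (LinearMap.ext fun x => by
    rw [hφeq, hc0, zero_dotProduct]; simp)

lemma exists_ball_subset_segSet (hctrb : (ctrbMatrix A B).rank = n) {a b : ℝ} (hab : a < b) :
    ∃ δ > 0, Metric.ball (0 : Fin n → ℝ) δ ⊆ segSet A B a b := by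
  have hconv := convex_segSet A B a b
  have h0 : (0 : Fin n → ℝ) ∈ segSet A B a b := zero_mem_segSet A B a b
  have hspan := span_segSet_eq_top A B hctrb hab
  have haff : affineSpan ℝ (segSet A B a b) = ⊤ := by
    rw [← top_le_iff]
    intro x _
    have hx : x ∈ Submodule.span ℝ (segSet A B a b) := by rw [hspan]; trivial
    have hdir : Submodule.span ℝ (segSet A B a b) ≤ (affineSpan ℝ (segSet A B a b)).direction := by
      rw [direction_affineSpan]
      refine Submodule.span_le.2 fun s hs => ?_
      have := vsub_mem_vectorSpan ℝ hs h0
      simpa using this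
    have := AffineSubspace.vadd_mem_of_mem_direction (hdir hx) (mem_affineSpan ℝ h0)
    simpa using this
  obtain ⟨x, hx⟩ := (hconv.interior_nonempty_iff_affineSpan_eq_top).2 haff
  have hnx : -x ∈ segSet A B a b := neg_mem_segSet A B (interior_subset hx)
  have h0int : (0 : Fin n → ℝ) ∈ interior (segSet A B a b) := by
    have := hconv.combo_interior_self_mem_interior hx hnx
      (a := (1:ℝ)/2) (b := (1:ℝ)/2) (by norm_num) (by norm_num) (by norm_num)
    simpa using this
  obtain ⟨δ, hδ, hball⟩ := Metric.mem_nhds_iff.1 (isOpen_interior.mem_nhds h0int)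
  exact ⟨δ, hδ, hball.trans interior_subset⟩

end TimeOpt

open TimeOpt in
theorem frontier_reachSet_time_optimal {n r : ℕ} (A : Matrix (Fin n) (Fin n) ℝ)
    (B : Matrix (Fin n) (Fin r) ℝ) (hctrb : (ctrbMatrix A B).rank = n)
    (T : ℝ) (hT : 0 < T) (x₀ : Fin n → ℝ) (hx₀ : x₀ ∈ frontier (reachSet A B T)) :
    (∀ τ : ℝ, 0 < τ → τ < T → x₀ ∉ reachSet A B τ) ∧ minTime A B x₀ = T := by
  have key : ∀ τ : ℝ, 0 < τ → τ < T → reachSet A B τ ⊆ interior (reachSet A B T) := by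
    intro τ h0τ hτT x hx
    obtain ⟨δ, hδ, hball⟩ := exists_ball_subset_segSet A B hctrb hτT
    refine mem_interior.2 ⟨Metric.ball x δ, ?_, Metric.isOpen_ball, Metric.mem_ball_self hδ⟩
    intro y hy
    rw [reachSet_eq] at hx ⊢
    have h1 : y - x ∈ segSet A B τ T := by
      apply hball
      rw [Metric.mem_ball, dist_eq_norm, sub_zero]
      rw [Metric.mem_ball, dist_eq_norm] at hy
      simpa using hy
    have := add_mem_segSet A B h0τ.le hτT.le hx h1
    simpa using this
  have part1 : ∀ τ : ℝ, 0 < τ → τ < T → x₀ ∉ reachSet A B τ := by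
    intro τ h1 h2 hmem
    exact hx₀.2 (key τ h1 h2 hmem)
  have reachTplus : ∀ ε : ℝ, 0 < ε → x₀ ∈ reachSet A B (T + ε) := by
    intro ε hε
    obtain ⟨δ, hδ, hball⟩ := exists_ball_subset_segSet A B hctrb
      (show T < T + ε by linarith)
    have hx₀c : x₀ ∈ closure (reachSet A B T) := frontier_subset_closure hx₀
    obtain ⟨x, hxmem, hxd⟩ := Metric.mem_closure_iff.1 hx₀c δ hδ
    rw [reachSet_eq] at hxmem ⊢
    have h1 : x₀ - x ∈ segSet A B T (T + ε) := by
      apply hball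
      rw [Metric.mem_ball, dist_eq_norm, sub_zero]
      rw [dist_eq_norm] at hxd
      simpa [norm_sub_rev] using hxd
    have := add_mem_segSet A B hT.le (by linarith) hxmem h1
    simpa using this
  refine ⟨part1, ?_⟩
  unfold minTime
  have hlb : ∀ τ ∈ {τ : ℝ | 0 < τ ∧ x₀ ∈ reachSet A B τ}, T ≤ τ := by
    rintro τ ⟨h1, h2⟩
    by_contra hlt
    exact part1 τ h1 (not_le.1 hlt) h2
  have hbdd : BddBelow {τ : ℝ | 0 < τ ∧ x₀ ∈ reachSet A B τ} := ⟨T, hlb⟩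
  apply le_antisymm
  · apply le_of_forall_pos_le_add
    intro ε hε
    exact csInf_le hbdd ⟨by linarith, reachTplus ε hε⟩
  · exact le_csInf ⟨T + 1, ⟨by linarith, reachTplus 1 one_pos⟩⟩ hlb
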